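/- Assume s is a proper scoring rule on 𝒫 with E_p s(p) finite for all p ∈ 𝒫. Let F = { s(p) : p ∈ 𝒫, s(p) finite } be the set of finite scores. Suppose that for every convergent sequence (p_n) of members of 𝒫̂ with s(p_n) ∈ F for all n, one has lim_n ⟨p_n, s(p_n)⟩ = ⟨p, s(p)⟩, where p = lim_n p_n. Then σ_F(p) = ⟨p, s(p)⟩ for all p ∈ 𝒫̂. -/
import Mathlib

open Filter Topology

variable {Ω : Type*}

def IsProbability [Fintype Ω] (p : Set Ω → ℝ) : Prop :=
  (∀ A, 0 ≤ p A) ∧ (∀ A B : Set Ω, Disjoint A B → p (A ∪ B) = p A + p B) ∧ p Set.univ = 1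

noncomputable def expScore [Fintype Ω] (p : Set Ω → ℝ) (f : Ω → EReal) : EReal :=
  ∑ ω, (p {ω} : EReal) * f ω

def FiniteScore (f : Ω → EReal) : Prop := ∀ ω, f ω ≠ ⊥ ∧ f ω ≠ ⊤

noncomputable def eip [Fintype Ω] (f : Ω → ℝ) (g : Ω → EReal) : EReal :=
  ∑ ω, (f ω : EReal) * g ω

def IsSimplex [Fintype Ω] (v : Ω → ℝ) : Prop :=
  (∀ ω, 0 ≤ v ω) ∧ ∑ ω, v ω = 1

noncomputable def toProb [Fintype Ω] (v : Ω → ℝ) : Set Ω → ℝ :=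
  fun A => ∑ ω, Set.indicator A v ω

def finScores [Fintype Ω] (s : (Set Ω → ℝ) → Ω → EReal) : Set (Ω → ℝ) :=
  {z | ∃ p, IsProbability p ∧ s p = fun ω => (z ω : EReal)}

noncomputable def suppFn [Fintype Ω] (F : Set (Ω → ℝ)) (v : Ω → ℝ) : EReal :=
  sSup ((fun z => ((∑ ω, v ω * z ω : ℝ) : EReal)) '' F)

/- ### auxiliary lemmas -/

lemma ereal_coe_sum {ι : Type*} (t : Finset ι) (f : ι → ℝ) :
    ((∑ i ∈ t, f i : ℝ) : EReal) = ∑ i ∈ t, (f i : EReal) :=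
  map_sum (⟨⟨Real.toEReal, EReal.coe_zero⟩, EReal.coe_add⟩ : ℝ →+ EReal) f t

lemma ereal_sum_bot {ι : Type*} [DecidableEq ι] (t : Finset ι) (f : ι → EReal) {i : ι}
    (hi : i ∈ t) (h : f i = ⊥) : ∑ j ∈ t, f j = ⊥ := by
  rw [← Finset.add_sum_erase t f hi, h, EReal.bot_add]

lemma toProb_singleton [Fintype Ω] (v : Ω → ℝ) (ω : Ω) : toProb v {ω} = v ω := by
  classical
  simp only [toProb, Set.indicator_apply, Set.mem_singleton_iff]
  rw [Finset.sum_ite_eq' Finset.univ ω v]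
  simp

lemma toProb_isProb [Fintype Ω] {v : Ω → ℝ} (hv : IsSimplex v) : IsProbability (toProb v) := by
  refine ⟨fun A => Finset.sum_nonneg fun ω _ => Set.indicator_nonneg (fun ω' _ => hv.1 ω') ω,
    fun A B hAB => ?_, by simpa [toProb] using hv.2⟩
  simp only [toProb]
  rw [← Finset.sum_add_distrib]
  exact Finset.sum_congr rfl fun ω _ => by rw [Set.indicator_union_of_disjoint hAB]

lemma expScore_toProb [Fintype Ω] (v : Ω → ℝ) (f : Ω → EReal) :
    expScore (toProb v) f = eip v f :=
  Finset.sum_congr rfl fun ω _ => by rw [toProb_singleton]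

lemma eip_coe [Fintype Ω] (v : Ω → ℝ) (z : Ω → ℝ) :
    eip v (fun ω => (z ω : EReal)) = ((∑ ω, v ω * z ω : ℝ) : EReal) := by
  rw [ereal_coe_sum]
  exact Finset.sum_congr rfl fun ω _ => (EReal.coe_mul _ _).symm

theorem stmt6 [Fintype Ω] [Nonempty Ω] (M : ℝ)
    (s : (Set Ω → ℝ) → Ω → EReal)
    (hbound : ∀ p, IsProbability p → ∀ ω, s p ω ≤ (M : EReal))
    (hproper : ∀ p q, IsProbability p → IsProbability q →
      expScore p (s q) ≤ expScore p (s p))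
    (hfin : ∀ p, IsProbability p →
      expScore p (s p) ≠ ⊥ ∧ expScore p (s p) ≠ ⊤)
    (hseq : ∀ (pn : ℕ → Ω → ℝ) (p : Ω → ℝ),
      (∀ n, IsSimplex (pn n)) → Tendsto pn atTop (𝓝 p) →
      (∀ n, FiniteScore (s (toProb (pn n)))) →
      Tendsto (fun n => eip (pn n) (s (toProb (pn n)))) atTop
        (𝓝 (eip p (s (toProb p))))) :
    ∀ p : Ω → ℝ, IsSimplex p →
      suppFn (finScores s) p = eip p (s (toProb p)) := by
  classical
  intro p hp
  have hpP : IsProbability (toProb p) := toProb_isProb hp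
  -- finite scores for fully supported simplex points
  have hfinsc : ∀ v : Ω → ℝ, IsSimplex v → (∀ ω, 0 < v ω) → FiniteScore (s (toProb v)) := by
    intro v hv hvpos ω
    refine ⟨fun hb => ?_, fun ht => ?_⟩
    · have : expScore (toProb v) (s (toProb v)) = ⊥ := by
        refine ereal_sum_bot Finset.univ _ (Finset.mem_univ ω) ?_
        rw [toProb_singleton, hb]
        exact EReal.coe_mul_bot_of_pos (hvpos ω)
      exact (hfin _ (toProb_isProb hv)).1 this
    · have := hbound _ (toProb_isProb hv) ω
      rw [ht] at this
      simp at this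
  refine le_antisymm ?_ ?_
  · -- upper bound: every ⟨p,z⟩ with z ∈ F is ≤ eip p (s (toProb p))
    refine sSup_le ?_
    rintro x ⟨z, ⟨q, hq, hsq⟩, rfl⟩
    have h1 : ((∑ ω, p ω * z ω : ℝ) : EReal) = eip p (s q) := by
      rw [hsq, eip_coe]
    have h2 := hproper (toProb p) q hpP hq
    rw [expScore_toProb, expScore_toProb] at h2
    dsimp only
    rw [h1]; exact h2
  · -- lower bound via the sequential hypothesis
    set card : ℝ := (Fintype.card Ω : ℝ) with hcard
    have hcardpos : 0 < card := by
      simp only [hcard]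
      exact_mod_cast Fintype.card_pos
    set u : Ω → ℝ := fun _ => 1 / card with hu
    have hu1 : ∑ ω, u ω = 1 := by
      simp [hu, Finset.sum_const, hcard]
    have husx : IsSimplex u := ⟨fun ω => by positivity, hu1⟩
    set ε : ℕ → ℝ := fun n => 1 / ((n : ℝ) + 2) with hε
    have hεpos : ∀ n, 0 < ε n := fun n => by positivity
    have hεlt : ∀ n, ε n < 1 := by
      intro n
      rw [hε]
      rw [div_lt_one (by positivity)]
      linarith [Nat.cast_nonneg (α := ℝ) n]
    have hε0 : Tendsto ε atTop (𝓝 0) := by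
      rw [hε]
      exact (tendsto_one_div_add_atTop_nhds_zero_nat).comp (tendsto_add_atTop_nat 1) |>.congr
        (fun n => by simp only [Function.comp_apply]; push_cast; rw [one_div]; ring_nf)
    set pn : ℕ → Ω → ℝ := fun n ω => (1 - ε n) * p ω + ε n * u ω with hpn
    have hpnsx : ∀ n, IsSimplex (pn n) := by
      intro n
      constructor
      · intro ω
        have := hp.1 ω
        have h2 : (0:ℝ) ≤ u ω := husx.1 ω
        have := (hεpos n).le
        have := (hεlt n).le
        simp only [hpn]
        nlinarith
      · simp only [hpn, Finset.sum_add_distrib, ← Finset.mul_sum, hp.2, hu1]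
        ring
    have hpnpos : ∀ n ω, 0 < pn n ω := by
      intro n ω
      have h1 : 0 < ε n * u ω := mul_pos (hεpos n) (by positivity)
      have h2 : 0 ≤ (1 - ε n) * p ω := mul_nonneg (by linarith [hεlt n]) (hp.1 ω)
      simp only [hpn]; linarith
    have hpntd : Tendsto pn atTop (𝓝 p) := by
      rw [tendsto_pi_nhds]
      intro ω
      have : Tendsto (fun n => (1 - ε n) * p ω + ε n * u ω) atTop (𝓝 ((1 - 0) * p ω + 0 * u ω)) := by
        exact (((tendsto_const_nhds.sub hε0).mul tendsto_const_nhds).add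
          (hε0.mul tendsto_const_nhds))
      simpa using this
    have hfs : ∀ n, FiniteScore (s (toProb (pn n))) := fun n =>
      hfinsc (pn n) (hpnsx n) (hpnpos n)
    have htd := hseq pn p hpnsx hpntd hfs
    -- real versions of the scores
    set z : ℕ → Ω → ℝ := fun n ω => (s (toProb (pn n)) ω).toReal with hz
    have hzco : ∀ n, s (toProb (pn n)) = fun ω => ((z n ω : ℝ) : EReal) := by
      intro n; funext ω
      exact (EReal.coe_toReal (hfs n ω).2 (hfs n ω).1).symm
    have hzM : ∀ n ω, z n ω ≤ M := by
      intro n ω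
      have := hbound _ (toProb_isProb (hpnsx n)) ω
      rw [hzco n] at this
      simpa using this
    have hzF : ∀ n, z n ∈ finScores s := fun n => ⟨toProb (pn n), toProb_isProb (hpnsx n), hzco n⟩
    set a : ℕ → ℝ := fun n => ∑ ω, pn n ω * z n ω with ha
    set b : ℕ → ℝ := fun n => ∑ ω, p ω * z n ω with hb
    set U : ℕ → ℝ := fun n => ∑ ω, u ω * z n ω with hU
    have haeq : ∀ n, eip (pn n) (s (toProb (pn n))) = ((a n : ℝ) : EReal) := by
      intro n; rw [hzco n, eip_coe]
    -- L is finite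
    have hL := hfin (toProb p) hpP
    rw [expScore_toProb] at hL
    set Lr : ℝ := (eip p (s (toProb p))).toReal with hLr
    have hLco : eip p (s (toProb p)) = ((Lr : ℝ) : EReal) := (EReal.coe_toReal hL.2 hL.1).symm
    -- a n → Lr
    have hat : Tendsto a atTop (𝓝 Lr) := by
      rw [← EReal.tendsto_coe]
      simp only [← haeq, ← hLco]
      exact htd
    -- decomposition a n = (1-ε n) * b n + ε n * U n
    have hdec : ∀ n, a n = (1 - ε n) * b n + ε n * U n := by
      intro n
      simp only [ha, hb, hU, hpn, Finset.mul_sum, ← Finset.sum_add_distrib]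
      exact Finset.sum_congr rfl fun ω _ => by ring
    have hUM : ∀ n, U n ≤ M := by
      intro n
      calc U n ≤ ∑ ω, u ω * M := Finset.sum_le_sum fun ω _ =>
              mul_le_mul_of_nonneg_left (hzM n ω) (husx.1 ω)
        _ = M := by rw [← Finset.sum_mul, hu1, one_mul]
    set c : ℕ → ℝ := fun n => (a n - ε n * M) / (1 - ε n) with hc
    have hcb : ∀ n, c n ≤ b n := by
      intro n
      rw [hc, div_le_iff₀ (by linarith [hεlt n])]
      have := hdec n
      have hU' := hUM n
      have hε' := (hεpos n).le
      nlinarith [mul_le_mul_of_nonneg_left (hUM n) (hεpos n).le]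
    have hct : Tendsto c atTop (𝓝 Lr) := by
      have : Tendsto (fun n => (a n - ε n * M) / (1 - ε n)) atTop (𝓝 ((Lr - 0 * M) / (1 - 0))) :=
        (hat.sub (hε0.mul tendsto_const_nhds)).div
          (tendsto_const_nhds.sub hε0) (by norm_num)
      simpa using this
    -- conclude
    rw [hLco]
    have hbs : ∀ n, ((b n : ℝ) : EReal) ≤ suppFn (finScores s) p :=
      fun n => le_sSup ⟨z n, hzF n, rfl⟩
    have hcs : ∀ n, ((c n : ℝ) : EReal) ≤ suppFn (finScores s) p :=
      fun n => le_trans (EReal.coe_le_coe_iff.mpr (hcb n)) (hbs n)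
    exact le_of_tendsto (EReal.tendsto_coe.mpr hct) (Eventually.of_forall hcs)
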